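/- arXiv:2402.15904 — 3 statements merged into one kernel-verified Lean document; each statement's English description precedes it below -/
import Mathlib

section
/- Fix two alternatives, n agents, and any family (u_p)_{p ∈ [0,1]} of single-peaked utility functions, one per peak. If two mechanisms f, g : [0,1]^n → [0,1] are both continuous and strategyproof on this domain and f(P) = g(P) for every single-minded profile P ∈ {0,1}^n, then f(P) = g(P) for every profile P ∈ [0,1]^n. -/
/-!
Fix all agents but `i` and view a continuous strategyproof mechanism as a function `φ` of agent
`i`'s report. Agents with peaks `0` and `1` force `φ 0 ≤ φ t ≤ φ 1`; a report `p` outside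
`[φ 0, φ 1]` then gets the nearer endpoint, and a report inside is attained by `φ` (intermediate
value theorem), so truthfulness forces `φ p = p`. Hence `φ p` is the median of `φ 0`, `p`, `φ 1`,
and the mechanism is determined, one coordinate at a time, by its values on `{0,1}ⁿ`.
-/

/-- `u` is single-peaked on `[0,1]` with peak `p`. -/
def SinglePeaked (p : ℝ) (u : ℝ → ℝ) : Prop :=
  ∀ q ∈ Set.Icc (0:ℝ) 1, q ≠ p → ∀ l ∈ Set.Ioo (0:ℝ) 1,
    u q < u (l * p + (1 - l) * q) ∧ u (l * p + (1 - l) * q) < u p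

open Set Function

namespace SinglePeaked

variable {p : ℝ} {u : ℝ → ℝ}

theorem lt_peak (h : SinglePeaked p u) {q : ℝ} (hq : q ∈ Icc (0:ℝ) 1) (hqp : q ≠ p) :
    u q < u p :=
  have h := h q hq hqp (1 / 2) ⟨by norm_num, by norm_num⟩
  h.1.trans h.2

theorem lt_of_mem_openSegment (h : SinglePeaked p u) {q x : ℝ} (hq : q ∈ Icc (0:ℝ) 1)
    (hqp : q ≠ p) (hx : x ∈ openSegment ℝ q p) : u q < u x := by
  obtain ⟨a, b, ha, hb, hab, rfl⟩ := hx
  obtain rfl : a = 1 - b := by linarith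
  have h := (h q hq hqp b ⟨hb, by linarith⟩).1
  rwa [show b * p + (1 - b) * q = (1 - b) • q + b • p by simp only [smul_eq_mul]; ring] at h

theorem strictAntiOn (h : SinglePeaked p u) (hp : 0 ≤ p) : StrictAntiOn u (Icc p 1) := by
  intro x hx y hy hxy
  have hy' : y ∈ Icc (0:ℝ) 1 := ⟨hp.trans hy.1, hy.2⟩
  rcases hx.1.eq_or_lt with rfl | hpx
  · exact h.lt_peak hy' hxy.ne'
  · refine h.lt_of_mem_openSegment hy' (hpx.trans hxy).ne' ?_
    rw [openSegment_symm, openSegment_eq_Ioo (hpx.trans hxy)]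
    exact ⟨hpx, hxy⟩

theorem strictMonoOn (h : SinglePeaked p u) (hp : p ≤ 1) : StrictMonoOn u (Icc 0 p) := by
  intro x hx y hy hxy
  have hx' : x ∈ Icc (0:ℝ) 1 := ⟨hx.1, hx.2.trans hp⟩
  rcases hy.2.eq_or_lt with rfl | hyp
  · exact h.lt_peak hx' hxy.ne
  · refine h.lt_of_mem_openSegment hx' (hxy.trans hyp).ne ?_
    rw [openSegment_eq_Ioo (hxy.trans hyp)]
    exact ⟨hxy, hyp⟩

end SinglePeaked

theorem eq_max_min_of_strategyproof {u : ℝ → ℝ → ℝ}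
    (hu : ∀ p ∈ Icc (0:ℝ) 1, SinglePeaked p (u p)) {φ : ℝ → ℝ}
    (hmaps : MapsTo φ (Icc 0 1) (Icc 0 1)) (hcont : ContinuousOn φ (Icc 0 1))
    (hsp : ∀ p ∈ Icc (0:ℝ) 1, ∀ t ∈ Icc (0:ℝ) 1, u p (φ t) ≤ u p (φ p))
    {p : ℝ} (hp : p ∈ Icc (0:ℝ) 1) : φ p = max (φ 0) (min p (φ 1)) := by
  have h0 : (0:ℝ) ∈ Icc (0:ℝ) 1 := left_mem_Icc.2 zero_le_one
  have h1 : (1:ℝ) ∈ Icc (0:ℝ) 1 := right_mem_Icc.2 zero_le_one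
  have lower : ∀ t ∈ Icc (0:ℝ) 1, φ 0 ≤ φ t := fun t ht =>
    ((hu 0 h0).strictAntiOn le_rfl).le_iff_ge (hmaps ht) (hmaps h0) |>.1 (hsp 0 h0 t ht)
  have upper : ∀ t ∈ Icc (0:ℝ) 1, φ t ≤ φ 1 := fun t ht =>
    ((hu 1 h1).strictMonoOn le_rfl).le_iff_le (hmaps ht) (hmaps h1) |>.1 (hsp 1 h1 t ht)
  rcases le_or_gt p (φ 0) with hp0 | hp0
  · have hle : φ p ≤ φ 0 := ((hu p hp).strictAntiOn hp.1).le_iff_ge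
      ⟨hp0, (hmaps h0).2⟩ ⟨hp0.trans (lower p hp), (hmaps hp).2⟩ |>.1 (hsp p hp 0 h0)
    rw [max_eq_left ((min_le_left _ _).trans hp0)]
    exact hle.antisymm (lower p hp)
  rcases le_or_gt (φ 1) p with hp1 | hp1
  · have hge : φ 1 ≤ φ p := ((hu p hp).strictMonoOn hp.2).le_iff_le
      ⟨(hmaps h1).1, hp1⟩ ⟨(hmaps hp).1, (upper p hp).trans hp1⟩ |>.1 (hsp p hp 1 h1)
    rw [min_eq_right hp1, max_eq_right (lower 1 h1)]
    exact (upper p hp).antisymm hge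
  obtain ⟨t, ht, hφt⟩ := intermediate_value_Icc zero_le_one hcont ⟨hp0.le, hp1.le⟩
  rw [min_eq_left hp1.le, max_eq_right hp0.le]
  by_contra hne
  have := hsp p hp t ht
  rw [hφt] at this
  exact this.not_gt ((hu p hp).lt_peak (hmaps hp) hne)

theorem eq_max_min_update {n : ℕ} {u : ℝ → ℝ → ℝ}
    (hu : ∀ p ∈ Icc (0:ℝ) 1, SinglePeaked p (u p)) {f : (Fin n → ℝ) → ℝ}
    (hfr : ∀ P : Fin n → ℝ, (∀ i, P i ∈ Icc (0:ℝ) 1) → f P ∈ Icc (0:ℝ) 1)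
    (hfc : ContinuousOn f {P : Fin n → ℝ | ∀ i, P i ∈ Icc (0:ℝ) 1})
    (hfsp : ∀ P : Fin n → ℝ, (∀ i, P i ∈ Icc (0:ℝ) 1) → ∀ i, ∀ p' ∈ Icc (0:ℝ) 1,
        u (P i) (f (update P i p')) ≤ u (P i) (f P))
    {P : Fin n → ℝ} (hP : ∀ i, P i ∈ Icc (0:ℝ) 1) (i : Fin n) :
    f P = max (f (update P i 0)) (min (P i) (f (update P i 1))) := by
  have hupd : ∀ t ∈ Icc (0:ℝ) 1, ∀ j, update P i t j ∈ Icc (0:ℝ) 1 := fun t ht =>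
    (forall_update_iff P fun _ y => y ∈ Icc (0:ℝ) 1).2 ⟨ht, fun j _ => hP j⟩
  simpa using eq_max_min_of_strategyproof hu (φ := fun t => f (update P i t))
    (fun t ht => hfr _ (hupd t ht))
    (hfc.comp (by fun_prop : Continuous (update P i)).continuousOn hupd)
    (fun p hp t ht => by simpa using hfsp _ (hupd p hp) i t ht) (hP i)

/-- two continuous strategyproof mechanisms (for two alternatives and an
arbitrary single-peaked domain) agreeing on all single-minded profiles agree everywhere. -/
theorem single_minded_determination {n : ℕ}
    (u : ℝ → ℝ → ℝ) (hu : ∀ p ∈ Set.Icc (0:ℝ) 1, SinglePeaked p (u p))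
    (f g : (Fin n → ℝ) → ℝ)
    (hfr : ∀ P : Fin n → ℝ, (∀ i, P i ∈ Set.Icc (0:ℝ) 1) → f P ∈ Set.Icc (0:ℝ) 1)
    (hgr : ∀ P : Fin n → ℝ, (∀ i, P i ∈ Set.Icc (0:ℝ) 1) → g P ∈ Set.Icc (0:ℝ) 1)
    (hfc : ContinuousOn f {P : Fin n → ℝ | ∀ i, P i ∈ Set.Icc (0:ℝ) 1})
    (hgc : ContinuousOn g {P : Fin n → ℝ | ∀ i, P i ∈ Set.Icc (0:ℝ) 1})
    (hfsp : ∀ P : Fin n → ℝ, (∀ i, P i ∈ Set.Icc (0:ℝ) 1) → ∀ i, ∀ p' ∈ Set.Icc (0:ℝ) 1,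
        u (P i) (f (Function.update P i p')) ≤ u (P i) (f P))
    (hgsp : ∀ P : Fin n → ℝ, (∀ i, P i ∈ Set.Icc (0:ℝ) 1) → ∀ i, ∀ p' ∈ Set.Icc (0:ℝ) 1,
        u (P i) (g (Function.update P i p')) ≤ u (P i) (g P))
    (heq : ∀ P : Fin n → ℝ, (∀ i, P i = 0 ∨ P i = 1) → f P = g P) :
    ∀ P : Fin n → ℝ, (∀ i, P i ∈ Set.Icc (0:ℝ) 1) → f P = g P := by
  classical
  suffices key : ∀ s : Finset (Fin n), ∀ P : Fin n → ℝ, (∀ i, P i ∈ Icc (0:ℝ) 1) →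
      (∀ i ∉ s, P i = 0 ∨ P i = 1) → f P = g P from
    fun P hP => key Finset.univ P hP fun i hi => absurd (Finset.mem_univ i) hi
  intro s
  induction s using Finset.induction_on with
  | empty => exact fun P _ hP01 => heq P fun i => hP01 i (Finset.notMem_empty i)
  | insert i s _ ih =>
    intro P hP hP01
    have hends : ∀ c : ℝ, c ∈ Icc (0:ℝ) 1 → (c = 0 ∨ c = 1) →
        f (update P i c) = g (update P i c) := fun c hc hc01 =>
      ih _ ((forall_update_iff P fun _ y => y ∈ Icc (0:ℝ) 1).2 ⟨hc, fun j _ => hP j⟩)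
        ((forall_update_iff P fun j y => j ∉ s → y = 0 ∨ y = 1).2
          ⟨fun _ => hc01, fun j hji hjs => hP01 j (by simp [hji, hjs])⟩)
    rw [eq_max_min_update hu hfr hfc hfsp hP i, eq_max_min_update hu hgr hgc hgsp hP i,
      hends 0 (left_mem_Icc.2 zero_le_one) (.inl rfl),
      hends 1 (right_mem_Icc.2 zero_le_one) (.inr rfl)]
end

section
/- With Leontief utilities, if a distribution q satisfies weak core fair share at a profile P, then q is Pareto efficient at P. -/
/-!
Suppose `q'` Pareto dominates `q`. With Leontief utilities, agent `i` is at least as well off at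
`r` as at `q` iff `r j ≥ u_i(q) * p_ij` for every alternative `j`, so both `q` and `q'` lie above
the floor `d j = max_i u_i(q) * p_ij`. Since `q ≠ q'` are both distributions, `d` has total mass
below `1`, and spreading the missing mass uniformly over `d` gives a distribution that strictly
improves every agent. The grand coalition, which controls the whole distribution, deviates to it,
contradicting weak core fair share.
-/

/-- Leontief utility of an agent with peak `p` at distribution `q`:
the minimum of `q j / p j` over alternatives `j` with `p j > 0`. -/
noncomputable def leontief {m : ℕ} (p q : Fin m → ℝ) : ℝ :=
  sInf {x : ℝ | ∃ j, 0 < p j ∧ x = q j / p j}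

/-- `q` satisfies core fair share at profile `P` (with Leontief utilities). -/
def CoreFairShare {m n : ℕ} (P : Fin n → Fin m → ℝ) (q : Fin m → ℝ) : Prop :=
  ¬ ∃ (N' : Finset (Fin n)) (q' : Fin m → ℝ), N'.Nonempty ∧
      q' ∈ stdSimplex ℝ (Fin m) ∧
      ∀ q'' ∈ stdSimplex ℝ (Fin m),
        (∀ i ∈ N', leontief (P i) q ≤
          leontief (P i) (((N'.card : ℝ) / (n : ℝ)) • q' +
            (1 - (N'.card : ℝ) / (n : ℝ)) • q'')) ∧
        (∃ i ∈ N', leontief (P i) q <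
          leontief (P i) (((N'.card : ℝ) / (n : ℝ)) • q' +
            (1 - (N'.card : ℝ) / (n : ℝ)) • q''))

/-- `q` satisfies weak core fair share at profile `P` (with Leontief utilities). -/
def WeakCoreFairShare {m n : ℕ} (P : Fin n → Fin m → ℝ) (q : Fin m → ℝ) : Prop :=
  ¬ ∃ (N' : Finset (Fin n)) (q' : Fin m → ℝ), N'.Nonempty ∧
      q' ∈ stdSimplex ℝ (Fin m) ∧
      ∀ q'' ∈ stdSimplex ℝ (Fin m), ∀ i ∈ N',
        leontief (P i) q <
          leontief (P i) (((N'.card : ℝ) / (n : ℝ)) • q' +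
            (1 - (N'.card : ℝ) / (n : ℝ)) • q'')

open Finset

lemma exists_pos_of_mem_stdSimplex {ι : Type*} [Fintype ι] {p : ι → ℝ}
    (hp : p ∈ stdSimplex ℝ ι) : ∃ j, 0 < p j := by
  obtain ⟨j, -, hj⟩ := exists_lt_of_sum_lt (s := univ) (f := 0) (g := p) (by simp [hp.2])
  exact ⟨j, hj⟩

lemma sum_lt_sum_of_le_of_le_of_ne {ι M : Type*} [Fintype ι] [AddCommMonoid M] [PartialOrder M]
    [IsOrderedCancelAddMonoid M] {d q q' : ι → M} (hq : ∀ j, d j ≤ q j)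
    (hq' : ∀ j, d j ≤ q' j) (hsum : ∑ j, q j = ∑ j, q' j) (hne : q ≠ q') :
    ∑ j, d j < ∑ j, q j := by
  refine (sum_le_sum fun j _ => hq j).lt_of_ne fun h => hne (funext fun j => ?_)
  have hdq := (sum_eq_sum_iff_of_le fun j _ => hq j).1 h
  have hdq' := (sum_eq_sum_iff_of_le fun j _ => hq' j).1 (h.trans hsum)
  rw [← hdq j (mem_univ j), hdq' j (mem_univ j)]

section Leontief

variable {m : ℕ} {p q : Fin m → ℝ} {c : ℝ}

lemma finite_leontief_ratios (p q : Fin m → ℝ) :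
    {x : ℝ | ∃ j, 0 < p j ∧ x = q j / p j}.Finite :=
  (Set.finite_range fun j => q j / p j).subset fun _ ⟨j, _, hx⟩ => ⟨j, hx.symm⟩

lemma leontief_le_div (q : Fin m → ℝ) {j : Fin m} (hj : 0 < p j) : leontief p q ≤ q j / p j :=
  csInf_le (finite_leontief_ratios p q).bddBelow ⟨j, hj, rfl⟩

lemma exists_leontief_eq_div (hp : ∃ j, 0 < p j) (q : Fin m → ℝ) :
    ∃ j, 0 < p j ∧ leontief p q = q j / p j := by
  obtain ⟨j, hj⟩ := hp
  have hne : {x : ℝ | ∃ j, 0 < p j ∧ x = q j / p j}.Nonempty := ⟨q j / p j, j, hj, rfl⟩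
  exact hne.csInf_mem (finite_leontief_ratios p q)

lemma le_leontief_iff (hp : ∃ j, 0 < p j) :
    c ≤ leontief p q ↔ ∀ j, 0 < p j → c * p j ≤ q j := by
  refine ⟨fun h j hj => (le_div_iff₀ hj).1 (h.trans (leontief_le_div q hj)), fun h => ?_⟩
  obtain ⟨j, hj, he⟩ := exists_leontief_eq_div hp q
  rw [he, le_div_iff₀ hj]
  exact h j hj

lemma lt_leontief_iff (hp : ∃ j, 0 < p j) :
    c < leontief p q ↔ ∀ j, 0 < p j → c * p j < q j := by
  refine ⟨fun h j hj => (lt_div_iff₀ hj).1 (h.trans_le (leontief_le_div q hj)), fun h => ?_⟩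
  obtain ⟨j, hj, he⟩ := exists_leontief_eq_div hp q
  rw [he, lt_div_iff₀ hj]
  exact h j hj

end Leontief

section Pareto

variable {m n : ℕ} {P : Fin n → Fin m → ℝ} {q r : Fin m → ℝ}

/-- The least nonnegative bundle at which every agent is at least as well off as at `q`. -/
noncomputable def utilityFloor (P : Fin n → Fin m → ℝ) (q : Fin m → ℝ) : Fin m → ℝ :=
  fun j => ⨆ i, leontief (P i) q * P i j

lemma le_utilityFloor (i : Fin n) (j : Fin m) : leontief (P i) q * P i j ≤ utilityFloor P q j :=
  le_ciSup (f := fun i => leontief (P i) q * P i j) (Set.finite_range _).bddAbove i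

lemma utilityFloor_nonneg (hP : ∀ i, P i ∈ stdSimplex ℝ (Fin m)) (hq : ∀ j, 0 ≤ q j)
    (j : Fin m) : 0 ≤ utilityFloor P q j :=
  Real.iSup_nonneg fun i => mul_nonneg
    ((le_leontief_iff (exists_pos_of_mem_stdSimplex (hP i))).2 fun j _ => by simpa using hq j)
    ((hP i).1 j)

lemma utilityFloor_le (hP : ∀ i, P i ∈ stdSimplex ℝ (Fin m)) (hr : ∀ j, 0 ≤ r j)
    (h : ∀ i, leontief (P i) q ≤ leontief (P i) r) (j : Fin m) :
    utilityFloor P q j ≤ r j := by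
  refine Real.iSup_le (fun i => ?_) (hr j)
  rcases ((hP i).1 j).eq_or_lt with hzero | hpos
  · rw [← hzero, mul_zero]
    exact hr j
  · exact (le_leontief_iff (exists_pos_of_mem_stdSimplex (hP i))).1 (h i) j hpos

lemma lt_leontief_utilityFloor_add (hP : ∀ i, P i ∈ stdSimplex ℝ (Fin m)) {ε : ℝ}
    (hε : 0 < ε) (i : Fin n) :
    leontief (P i) q < leontief (P i) (utilityFloor P q + fun _ => ε) :=
  (lt_leontief_iff (exists_pos_of_mem_stdSimplex (hP i))).2 fun j _ =>
    (le_utilityFloor i j).trans_lt (lt_add_of_pos_right _ hε)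

lemma exists_forall_lt_leontief_of_ne {q' : Fin m → ℝ}
    (hP : ∀ i, P i ∈ stdSimplex ℝ (Fin m)) (hq : q ∈ stdSimplex ℝ (Fin m))
    (hq' : q' ∈ stdSimplex ℝ (Fin m))
    (hle : ∀ i, leontief (P i) q ≤ leontief (P i) q') (hne : q ≠ q') :
    ∃ qs ∈ stdSimplex ℝ (Fin m), ∀ i, leontief (P i) q < leontief (P i) qs := by
  set d := utilityFloor P q
  have hm : (0 : ℝ) < m := by
    obtain ⟨j, -⟩ := exists_pos_of_mem_stdSimplex hq
    exact_mod_cast j.pos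
  have hd : ∑ j, d j < 1 := hq.2 ▸ sum_lt_sum_of_le_of_le_of_ne
    (utilityFloor_le hP hq.1 fun _ => le_rfl) (utilityFloor_le hP hq'.1 hle)
    (hq.2.trans hq'.2.symm) hne
  set ε := (1 - ∑ j, d j) / m
  have hε : 0 < ε := div_pos (sub_pos.2 hd) hm
  refine ⟨d + fun _ => ε, ⟨fun j => add_nonneg (utilityFloor_nonneg hP hq.1 j) hε.le, ?_⟩,
    lt_leontief_utilityFloor_add hP hε⟩
  simp only [Pi.add_apply, sum_add_distrib, sum_const, card_univ, Fintype.card_fin,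
    nsmul_eq_mul, ε]
  field_simp
  ring

lemma WeakCoreFairShare.not_forall_lt_leontief [Nonempty (Fin n)] (h : WeakCoreFairShare P q)
    {qs : Fin m → ℝ} (hqs : qs ∈ stdSimplex ℝ (Fin m)) :
    ¬ ∀ i, leontief (P i) q < leontief (P i) qs := by
  intro hlt
  have hn : (n : ℝ) ≠ 0 := by exact_mod_cast (Fin.pos (Classical.arbitrary (Fin n))).ne'
  exact h ⟨univ, qs, univ_nonempty, hqs, fun q'' _ i _ => by simpa [hn] using hlt i⟩

end Pareto

/-- with Leontief utilities, weak core fair share implies Pareto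
efficiency. -/
theorem weak_cfs_implies_efficiency {m n : ℕ}
    (P : Fin n → Fin m → ℝ) (hP : ∀ i, P i ∈ stdSimplex ℝ (Fin m))
    (q : Fin m → ℝ) (hq : q ∈ stdSimplex ℝ (Fin m))
    (hwcfs : WeakCoreFairShare P q) :
    ¬ ∃ q' ∈ stdSimplex ℝ (Fin m),
        (∀ i, leontief (P i) q ≤ leontief (P i) q') ∧
        (∃ i, leontief (P i) q < leontief (P i) q') := by
  rintro ⟨q', hq', hle, i, hlt⟩
  have : Nonempty (Fin n) := ⟨i⟩
  obtain ⟨qs, hqs, hstrict⟩ :=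
    exists_forall_lt_leontief_of_ne hP hq hq' hle (by rintro rfl; exact hlt.false)
  exact hwcfs.not_forall_lt_leontief hqs hstrict
end

section
/- With Leontief utilities, if a distribution q is Pareto efficient at a profile P = (p_1, …, p_n), then q_j ≤ max_{i=1,…,n} p_{i,j} for every alternative j. -/
lemma leontief_exists_pos {m : ℕ} {p : Fin m → ℝ} (hp : p ∈ stdSimplex ℝ (Fin m)) :
    ∃ j, 0 < p j := by
  by_contra h
  push_neg at h
  have hz : ∀ j, p j = 0 := fun j => le_antisymm (h j) (hp.1 j)
  have hs := hp.2
  rw [Finset.sum_congr rfl (fun j _ => hz j)] at hs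
  simp at hs

lemma leontief_le {m : ℕ} {p q : Fin m → ℝ} (hq : ∀ k, 0 ≤ q k) {j : Fin m}
    (hj : 0 < p j) : leontief p q ≤ q j / p j := by
  apply csInf_le
  · refine ⟨0, ?_⟩
    rintro x ⟨k, hk, rfl⟩
    exact div_nonneg (hq k) hk.le
  · exact ⟨j, hj, rfl⟩

lemma le_leontief {m : ℕ} {p q : Fin m → ℝ} (hne : ∃ j, 0 < p j) {a : ℝ}
    (h : ∀ j, 0 < p j → a ≤ q j / p j) : a ≤ leontief p q := by
  apply le_csInf
  · obtain ⟨j, hj⟩ := hne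
    exact ⟨q j / p j, j, hj, rfl⟩
  · rintro x ⟨j, hj, rfl⟩
    exact h j hj

lemma lt_leontief {m : ℕ} {p q : Fin m → ℝ} (hne : ∃ j, 0 < p j) {a : ℝ}
    (h : ∀ j, 0 < p j → a < q j / p j) : a < leontief p q := by
  have hSne : Set.Nonempty {x : ℝ | ∃ j, 0 < p j ∧ x = q j / p j} := by
    obtain ⟨j, hj⟩ := hne
    exact ⟨q j / p j, j, hj, rfl⟩
  have hfin : Set.Finite {x : ℝ | ∃ j, 0 < p j ∧ x = q j / p j} := by
    apply (Set.finite_range (fun j => q j / p j)).subset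
    rintro x ⟨j, hj, rfl⟩
    exact ⟨j, rfl⟩
  obtain ⟨j, hj, he⟩ := hSne.csInf_mem hfin
  rw [leontief, he]
  exact h j hj

lemma leontief_le_one {m : ℕ} {p q : Fin m → ℝ} (hp : p ∈ stdSimplex ℝ (Fin m))
    (hq : q ∈ stdSimplex ℝ (Fin m)) : leontief p q ≤ 1 := by
  by_contra h
  push_neg at h
  have key : ∀ j, 0 < p j → p j < q j := by
    intro j hj
    have h1 : leontief p q ≤ q j / p j := leontief_le hq.1 hj
    have h2 : 1 < q j / p j := lt_of_lt_of_le h h1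
    rw [lt_div_iff₀ hj] at h2
    linarith
  obtain ⟨j0, hj0⟩ := leontief_exists_pos hp
  have hlt : (∑ j, p j) < ∑ j, q j := by
    apply Finset.sum_lt_sum
    · intro j _
      rcases lt_or_ge 0 (p j) with hpos | hle
      · exact (key j hpos).le
      · exact le_trans hle (hq.1 j)
    · exact ⟨j0, Finset.mem_univ _, key j0 hj0⟩
  rw [hp.2, hq.2] at hlt
  linarith

/-- with Leontief utilities, every Pareto-efficient distribution `q`
satisfies `q j ≤ max_i p_{i,j}` for every alternative `j`. -/
theorem efficient_one_sided_range_respect {m n : ℕ} [NeZero n]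
    (P : Fin n → Fin m → ℝ) (hP : ∀ i, P i ∈ stdSimplex ℝ (Fin m))
    (q : Fin m → ℝ) (hq : q ∈ stdSimplex ℝ (Fin m))
    (heff : ¬ ∃ q' ∈ stdSimplex ℝ (Fin m),
        (∀ i, leontief (P i) q ≤ leontief (P i) q') ∧
        (∃ i, leontief (P i) q < leontief (P i) q')) :
    ∀ j, q j ≤ Finset.univ.sup' Finset.univ_nonempty (fun i => P i j) := by
  have hu1 : ∀ i, leontief (P i) q ≤ 1 := fun i => leontief_le_one (hP i) hq
  have huq : ∀ i j, 0 < P i j → leontief (P i) q * P i j ≤ q j := by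
    intro i j hj
    have h := leontief_le hq.1 hj (p := P i)
    rw [le_div_iff₀ hj] at h
    exact h
  intro j0
  by_contra hlt
  push_neg at hlt
  apply heff
  set M : ℝ := Finset.univ.sup' Finset.univ_nonempty (fun i => P i j0) with hM
  set i0 : Fin n := 0 with hi0
  set ε : ℝ := (q j0 - M) / 2 with hε
  have hεdef : ε = (q j0 - M) / 2 := rfl
  have hε0 : 0 < ε := by rw [hεdef]; linarith
  have hMi : ∀ i, P i j0 ≤ M := fun i => Finset.le_sup' (fun i => P i j0) (Finset.mem_univ i)
  have hM0 : 0 ≤ M := le_trans ((hP i0).1 j0) (hMi i0)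
  set q' : Fin m → ℝ := fun j => q j + ε * P i0 j - (if j = j0 then ε else 0) with hq'
  have hval : q' j0 = q j0 + ε * P i0 j0 - ε := by simp [hq']
  have hval' : ∀ j, j ≠ j0 → q' j = q j + ε * P i0 j := by
    intro j h; simp [hq', h]
  have hq'mem : q' ∈ stdSimplex ℝ (Fin m) := by
    constructor
    · intro j
      by_cases h : j = j0
      · subst h
        rw [hval]
        have h1 : 0 ≤ ε * P i0 j := mul_nonneg hε0.le ((hP i0).1 j)
        have h2 : M < q j := hlt
        rw [hεdef] at h1 ⊢
        linarith
      · rw [hval' j h]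
        have h1 : 0 ≤ ε * P i0 j := mul_nonneg hε0.le ((hP i0).1 j)
        linarith [hq.1 j]
    · have hs : (∑ j, q' j) = (∑ j, q j) + ε * (∑ j, P i0 j) - ε := by
        rw [hq']
        rw [Finset.sum_sub_distrib, Finset.sum_add_distrib, ← Finset.mul_sum]
        simp
      rw [hs, hq.2, (hP i0).2]
      ring
  have hweak : ∀ i, leontief (P i) q ≤ leontief (P i) q' := by
    intro i
    apply le_leontief (leontief_exists_pos (hP i))
    intro j hj
    rw [le_div_iff₀ hj]
    by_cases h : j = j0
    · subst h
      rw [hval]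
      have h1 : leontief (P i) q * P i j ≤ 1 * P i j :=
        mul_le_mul_of_nonneg_right (hu1 i) ((hP i).1 j)
      have h2 : P i j ≤ M := hMi i
      have h3 : 0 ≤ ε * P i0 j := mul_nonneg hε0.le ((hP i0).1 j)
      rw [hεdef] at h3 ⊢
      linarith
    · rw [hval' j h]
      have h1 := huq i j hj
      have h2 : 0 ≤ ε * P i0 j := mul_nonneg hε0.le ((hP i0).1 j)
      linarith
  refine ⟨q', hq'mem, hweak, ⟨i0, ?_⟩⟩
  apply lt_leontief (leontief_exists_pos (hP i0))
  intro j hj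
  rw [lt_div_iff₀ hj]
  by_cases h : j = j0
  · subst h
    rw [hval]
    have h1 : leontief (P i0) q * P i0 j ≤ 1 * P i0 j :=
      mul_le_mul_of_nonneg_right (hu1 i0) ((hP i0).1 j)
    have h2 : P i0 j ≤ M := hMi i0
    have h3 : 0 ≤ ε * P i0 j := mul_nonneg hε0.le ((hP i0).1 j)
    rw [hεdef] at h3 ⊢
    linarith
  · rw [hval' j h]
    have h1 := huq i0 j hj
    have h2 : 0 < ε * P i0 j := mul_pos hε0 hj
    linarith
end
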